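/- Let R be a tree on at least two vertices with a distinguished root r whose degree in R is at least 2, and let b > 1 be an integer. Then TW(T_{1,b}) > TW(T_{0,b+1}), where for nonnegative integers s,t the tree T_{s,t} is obtained from R by attaching at r two new vertex-disjoint paths r–u_1–u_2–⋯–u_s and r–v_1–v_2–⋯–v_t. -/

import Mathlib

open Finset

/-- The pendent vertices of a graph on a finite vertex type: the vertices of degree 1. -/
noncomputable def pendentFinset {V : Type*} [Fintype V] (G : SimpleGraph V) : Finset V := by
  classical exact univ.filter (fun v => G.degree v = 1)

/-- The terminal Wiener index of a graph: the sum of the distances over all unordered pairs of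
pendent vertices, i.e. half of the sum over all ordered pairs of pendent vertices. -/
noncomputable def terminalWienerIndex {V : Type*} [Fintype V] (G : SimpleGraph V) : ℕ :=
  (∑ u ∈ pendentFinset G, ∑ v ∈ pendentFinset G, G.dist u v) / 2

/-- `T_{s,t}`: the tree obtained from a tree `R` with distinguished root `r` by attaching at
`r` two new vertex-disjoint paths `r–u₁–⋯–u_s` and `r–v₁–⋯–v_t` (the path being empty if
`s = 0`, resp. `t = 0`). -/
def pathTree {V : Type*} (R : SimpleGraph V) (r : V) (s t : ℕ) :
    SimpleGraph (V ⊕ (Fin s ⊕ Fin t)) :=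
  SimpleGraph.fromRel (fun x y =>
    (∃ a b : V, x = Sum.inl a ∧ y = Sum.inl b ∧ R.Adj a b) ∨
    (∃ h : 0 < s, x = Sum.inl r ∧ y = Sum.inr (Sum.inl ⟨0, h⟩)) ∨
    (∃ i j : Fin s, x = Sum.inr (Sum.inl i) ∧ y = Sum.inr (Sum.inl j) ∧ (j : ℕ) = (i : ℕ) + 1) ∨
    (∃ h : 0 < t, x = Sum.inl r ∧ y = Sum.inr (Sum.inr ⟨0, h⟩)) ∨
    (∃ i j : Fin t, x = Sum.inr (Sum.inr i) ∧ y = Sum.inr (Sum.inr j) ∧ (j : ℕ) = (i : ℕ) + 1))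

/-!
Distances in `T_{s,t}` are pinned down by matching an explicit walk with a 1-Lipschitz
potential: from a vertex `a` of `R`, the `i`-th vertex of an arm lies at distance
`d_R(a, r) + i`, and vertices on different arms are at distance the sum of their depths.
Since `deg_R r ≥ 2`, the pendent vertices of `T_{0,b+1}` are those of `R` plus `v_{b+1}`, and
those of `T_{1,b}` are those of `R` plus `v_b` and `u_1`. Summing, the pendent distance sum of
`T_{1,b}` exceeds that of `T_{0,b+1}` by `2 (∑_p d_R(p, r) + b + 1) > 0`.
-/

namespace SimpleGraph

variable {W : Type*} {G : SimpleGraph W}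

theorem Walk.abs_sub_le_length (f : W → ℤ) (hf : ∀ x y, G.Adj x y → |f x - f y| ≤ 1)
    {x y : W} (p : G.Walk x y) : |f x - f y| ≤ p.length := by
  induction p with
  | nil => simp
  | @cons x y z h p ih =>
    calc |f x - f z| ≤ |f x - f y| + |f y - f z| := abs_sub_le _ _ _
      _ ≤ 1 + p.length := add_le_add (hf _ _ h) ih
      _ = (p.cons h).length := by push_cast [Walk.length_cons]; ring

theorem Reachable.abs_sub_le_dist (f : W → ℤ) (hf : ∀ x y, G.Adj x y → |f x - f y| ≤ 1)
    {x y : W} (h : G.Reachable x y) : |f x - f y| ≤ G.dist x y := by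
  obtain ⟨p, hp⟩ := h.exists_walk_length_eq_dist
  exact hp ▸ p.abs_sub_le_length f hf

theorem Connected.abs_dist_sub_dist_le_one (hG : G.Connected) (a : W) {x y : W}
    (h : G.Adj x y) : |(G.dist a x : ℤ) - G.dist a y| ≤ 1 := by
  have hxy := hG.dist_triangle (u := a) (v := x) (w := y)
  have hyx := hG.dist_triangle (u := a) (v := y) (w := x)
  rw [dist_eq_one_iff_adj.mpr h] at hxy
  rw [dist_eq_one_iff_adj.mpr h.symm] at hyx
  rw [abs_sub_le_iff]
  omega

theorem not_existsUnique_adj {x y z : W} (hyz : y ≠ z) (hy : G.Adj x y) (hz : G.Adj x z) :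
    ¬∃! w, G.Adj x w :=
  fun h => hyz (h.unique hy hz)

end SimpleGraph

open SimpleGraph

theorem mem_pendentFinset_iff {W : Type*} [Fintype W] {G : SimpleGraph W} {x : W} :
    x ∈ pendentFinset G ↔ ∃! y, G.Adj x y := by
  classical
  simp only [pendentFinset, Finset.mem_filter, Finset.mem_univ, true_and]
  convert degree_eq_one_iff_existsUnique_adj

noncomputable def pendentDistSum {W : Type*} [Fintype W] (G : SimpleGraph W) : ℕ :=
  ∑ u ∈ pendentFinset G, ∑ v ∈ pendentFinset G, G.dist u v

theorem Finset.sum_sum_insert_of_symm {α M : Type*} [DecidableEq α] [AddCommMonoid M]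
    {f : α → α → M} (hf : ∀ a b, f a b = f b a) {s : Finset α} {x : α} (hx : x ∉ s) :
    ∑ a ∈ insert x s, ∑ b ∈ insert x s, f a b
      = ∑ a ∈ s, ∑ b ∈ s, f a b + 2 • ∑ a ∈ s, f a x + f x x := by
  simp only [Finset.sum_insert hx, Finset.sum_add_distrib, two_nsmul, hf x]
  abel

section PathTree

variable {V : Type*} {R : SimpleGraph V} {r : V} {s t : ℕ}

@[simp]
theorem pathTree_adj_inl_inl {a c : V} :
    (pathTree R r s t).Adj (.inl a) (.inl c) ↔ R.Adj a c := by
  simpa [pathTree, adj_comm R c a] using Adj.ne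

@[simp]
theorem pathTree_adj_inl_inr_inl {a : V} {i : Fin s} :
    (pathTree R r s t).Adj (.inl a) (.inr (.inl i)) ↔ a = r ∧ (i : ℕ) = 0 := by
  simp [pathTree, Fin.ext_iff, i.pos]

@[simp]
theorem pathTree_adj_inl_inr_inr {a : V} {i : Fin t} :
    (pathTree R r s t).Adj (.inl a) (.inr (.inr i)) ↔ a = r ∧ (i : ℕ) = 0 := by
  simp [pathTree, Fin.ext_iff, i.pos]

@[simp]
theorem pathTree_adj_inr_inl_inl {a : V} {i : Fin s} :
    (pathTree R r s t).Adj (.inr (.inl i)) (.inl a) ↔ a = r ∧ (i : ℕ) = 0 := by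
  rw [adj_comm, pathTree_adj_inl_inr_inl]

@[simp]
theorem pathTree_adj_inr_inr_inl {a : V} {i : Fin t} :
    (pathTree R r s t).Adj (.inr (.inr i)) (.inl a) ↔ a = r ∧ (i : ℕ) = 0 := by
  rw [adj_comm, pathTree_adj_inl_inr_inr]

@[simp]
theorem pathTree_adj_inr_inl_inr_inl {i j : Fin s} :
    (pathTree R r s t).Adj (.inr (.inl i)) (.inr (.inl j)) ↔
      (j : ℕ) = i + 1 ∨ (i : ℕ) = j + 1 := by
  simp [pathTree]
  omega

@[simp]
theorem pathTree_adj_inr_inr_inr_inr {i j : Fin t} :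
    (pathTree R r s t).Adj (.inr (.inr i)) (.inr (.inr j)) ↔
      (j : ℕ) = i + 1 ∨ (i : ℕ) = j + 1 := by
  simp [pathTree]
  omega

@[simp]
theorem not_pathTree_adj_inr_inl_inr_inr {i : Fin s} {j : Fin t} :
    ¬(pathTree R r s t).Adj (.inr (.inl i)) (.inr (.inr j)) := by
  simp [pathTree]

@[simp]
theorem not_pathTree_adj_inr_inr_inr_inl {i : Fin t} {j : Fin s} :
    ¬(pathTree R r s t).Adj (.inr (.inr i)) (.inr (.inl j)) := by
  simp [pathTree]

variable (R r s t) in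
def pathTreeInl : R →g pathTree R r s t where
  toFun := Sum.inl
  map_rel' := pathTree_adj_inl_inl.mpr

@[simp]
theorem pathTreeInl_apply (a : V) : pathTreeInl R r s t a = .inl a := rfl

variable (r) in
@[simp]
def pathTreeFoot : V ⊕ (Fin s ⊕ Fin t) → V
  | .inl a => a
  | .inr _ => r

@[simp]
def pathTreeHeight : V ⊕ (Fin s ⊕ Fin t) → ℕ
  | .inl _ => 0
  | .inr (.inl i) => i + 1
  | .inr (.inr i) => i + 1

theorem exists_pathTree_walk_foot (x : V ⊕ (Fin s ⊕ Fin t)) :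
    ∃ p : (pathTree R r s t).Walk (.inl (pathTreeFoot r x)) x, p.length = pathTreeHeight x := by
  rcases x with a | ⟨i, hi⟩ | ⟨i, hi⟩
  · exact ⟨.nil, rfl⟩
  all_goals
    show ∃ p : (pathTree R r s t).Walk (.inl r) _, p.length = i + 1
    induction i with
    | zero => exact ⟨Walk.cons (by simp) .nil, rfl⟩
    | succ i ih =>
      obtain ⟨p, hp⟩ := ih (by omega)
      exact ⟨p.concat (by simp), by rw [Walk.length_concat, hp]⟩

theorem pathTree_dist_inl (hR : R.Connected) (a : V) (x : V ⊕ (Fin s ⊕ Fin t)) :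
    (pathTree R r s t).dist (.inl a) x = R.dist a (pathTreeFoot r x) + pathTreeHeight x := by
  obtain ⟨q, hq⟩ := hR.exists_walk_length_eq_dist a (pathTreeFoot r x)
  obtain ⟨p, hp⟩ := exists_pathTree_walk_foot (R := R) x
  obtain ⟨w, hw⟩ : ∃ w : (pathTree R r s t).Walk (.inl a) x,
      w.length = R.dist a (pathTreeFoot r x) + pathTreeHeight x :=
    ⟨(q.map (pathTreeInl R r s t)).append p, by
      rw [← hq, ← hp, ← Walk.length_map (pathTreeInl R r s t) q]; exact Walk.length_append _ _⟩
  refine le_antisymm (hw ▸ dist_le w) ?_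
  let f : V ⊕ (Fin s ⊕ Fin t) → ℤ := fun y => R.dist a (pathTreeFoot r y) + pathTreeHeight y
  have hf : ∀ y z, (pathTree R r s t).Adj y z → |f y - f z| ≤ 1 := by
    rintro (b | i | i) (c | j | j) h <;> simp at h
    all_goals simp [f, h]
    · exact hR.abs_dist_sub_dist_le_one a h
    all_goals rw [abs_le]; omega
  have := w.reachable.abs_sub_le_dist f hf
  rw [show f (.inl a) = 0 by simp [f], zero_sub, abs_neg, abs_of_nonneg (by positivity)] at this
  zify
  exact this

theorem pathTree_dist_inr_inl_inr_inr (i : Fin s) (j : Fin t) :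
    (pathTree R r s t).dist (.inr (.inl i)) (.inr (.inr j)) = i + j + 2 := by
  obtain ⟨p, hp⟩ : ∃ p : (pathTree R r s t).Walk (.inl r) (.inr (.inl i)), p.length = i + 1 :=
    exists_pathTree_walk_foot (.inr (.inl i))
  obtain ⟨q, hq⟩ : ∃ q : (pathTree R r s t).Walk (.inl r) (.inr (.inr j)), q.length = j + 1 :=
    exists_pathTree_walk_foot (.inr (.inr j))
  obtain ⟨w, hw⟩ : ∃ w : (pathTree R r s t).Walk (.inr (.inl i)) (.inr (.inr j)),
      w.length = i + j + 2 :=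
    ⟨p.reverse.append q, by rw [Walk.length_append, Walk.length_reverse, hp, hq]; ring⟩
  refine le_antisymm (hw ▸ dist_le w) ?_
  let f : V ⊕ (Fin s ⊕ Fin t) → ℤ := Sum.elim 0 (Sum.elim (fun i => -(i + 1)) (fun j => j + 1))
  have hf : ∀ y z, (pathTree R r s t).Adj y z → |f y - f z| ≤ 1 := by
    rintro (b | i | i) (c | j | j) h <;> simp at h <;> simp [f, h]
    all_goals rw [abs_le]; omega
  have := w.reachable.abs_sub_le_dist f hf
  simp only [f, Sum.elim_inl, Sum.elim_inr, abs_le] at this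
  omega

variable [Fintype V]

theorem inl_mem_pendentFinset_pathTree [DecidableRel R.Adj] (hdeg : 2 ≤ R.degree r) (a : V) :
    .inl a ∈ pendentFinset (pathTree R r s t) ↔ a ∈ pendentFinset R := by
  rw [mem_pendentFinset_iff, mem_pendentFinset_iff]
  by_cases ha : a = r
  · subst ha
    obtain ⟨y, hy, z, hz, hyz⟩ := Finset.one_lt_card.mp hdeg
    rw [mem_neighborFinset] at hy hz
    exact iff_of_false (not_existsUnique_adj (Sum.inl_injective.ne hyz) (by simpa) (by simpa))
      (not_existsUnique_adj hyz hy hz)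
  constructor
  · rintro ⟨y, hy, huniq⟩
    rcases y with c | j | j <;> simp [ha] at hy
    exact ⟨c, hy, fun c' hc' => Sum.inl_injective (huniq _ (by simpa))⟩
  · rintro ⟨c, hc, huniq⟩
    refine ⟨.inl c, by simpa, ?_⟩
    rintro (c' | j | j) h <;> simp [ha] at h
    exact congrArg _ (huniq _ h)

theorem inr_inl_mem_pendentFinset_pathTree_one (i : Fin 1) :
    .inr (.inl i) ∈ pendentFinset (pathTree R r 1 t) := by
  rw [mem_pendentFinset_iff]
  refine ⟨.inl r, by simp, ?_⟩
  rintro (c | j | j) h <;> simp at h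
  rw [h]

theorem inr_inr_mem_pendentFinset_pathTree (i : Fin t) :
    .inr (.inr i) ∈ pendentFinset (pathTree R r s t) ↔ (i : ℕ) + 1 = t := by
  rw [mem_pendentFinset_iff]
  obtain ⟨_ | i, hi⟩ := i <;> dsimp only
  · constructor
    · intro h
      by_contra hne
      exact not_existsUnique_adj (y := .inl r) (z := .inr (.inr ⟨1, by omega⟩))
        (by simp) (by simp) (by simp) h
    · intro hlast
      refine ⟨.inl r, by simp, ?_⟩
      rintro (c | j | j) h <;> simp at h
      · rw [h]
      · omega
  · constructor
    · intro h
      by_contra hne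
      exact not_existsUnique_adj (y := .inr (.inr ⟨i, by omega⟩))
        (z := .inr (.inr ⟨i + 2, by omega⟩)) (by simp [Fin.ext_iff]) (by simp) (by simp) h
    · intro hlast
      refine ⟨.inr (.inr ⟨i, by omega⟩), by simp, ?_⟩
      rintro (c | j | j) h <;> simp at h
      simp [Fin.ext_iff]
      omega

variable [DecidableRel R.Adj]

theorem pendentFinset_pathTree_zero [DecidableEq V] (hdeg : 2 ≤ R.degree r) :
    pendentFinset (pathTree R r 0 (t + 1)) =
      insert (.inr (.inr (Fin.last t))) ((pendentFinset R).map .inl) := by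
  ext (a | i | i)
  · simp [inl_mem_pendentFinset_pathTree hdeg]
  · exact i.elim0
  · simp [inr_inr_mem_pendentFinset_pathTree, Fin.ext_iff]

theorem pendentFinset_pathTree_one [DecidableEq V] (hdeg : 2 ≤ R.degree r) :
    pendentFinset (pathTree R r 1 (t + 1)) =
      insert (.inr (.inl 0)) (insert (.inr (.inr (Fin.last t))) ((pendentFinset R).map .inl)) := by
  ext (a | i | i)
  · simp [inl_mem_pendentFinset_pathTree hdeg]
  · simp [inr_inl_mem_pendentFinset_pathTree_one, Fin.fin_one_eq_zero i]
  · simp [inr_inr_mem_pendentFinset_pathTree, Fin.ext_iff]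

theorem pendentDistSum_pathTree_zero (hR : R.Connected) (hdeg : 2 ≤ R.degree r) :
    pendentDistSum (pathTree R r 0 (t + 1)) =
      pendentDistSum R + 2 * ∑ p ∈ pendentFinset R, (R.dist p r + (t + 1)) := by
  classical
  rw [pendentDistSum, pendentFinset_pathTree_zero hdeg,
    Finset.sum_sum_insert_of_symm (fun _ _ => dist_comm) (by simp)]
  simp [pathTree_dist_inl hR, pendentDistSum]

theorem pendentDistSum_pathTree_one (hR : R.Connected) (hdeg : 2 ≤ R.degree r) :
    pendentDistSum (pathTree R r 1 (t + 1)) =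
      pendentDistSum R + 2 * ∑ p ∈ pendentFinset R, (R.dist p r + (t + 1)) +
        2 * (∑ p ∈ pendentFinset R, (R.dist p r + 1) + (t + 2)) := by
  classical
  rw [pendentDistSum, pendentFinset_pathTree_one hdeg,
    Finset.sum_sum_insert_of_symm (fun _ _ => dist_comm) (by simp),
    Finset.sum_sum_insert_of_symm (fun _ _ => dist_comm) (by simp)]
  simp [pathTree_dist_inl hR, pendentDistSum, dist_comm (u := Sum.inr (Sum.inr _)),
    pathTree_dist_inr_inl_inr_inr]
  ring

end PathTree

theorem terminal_wiener_index_pathTree_gt_general {V : Type*} [Fintype V] (R : SimpleGraph V)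
    [DecidableRel R.Adj] (r : V) (hR : R.IsTree)
    (hdeg : 2 ≤ R.degree r) (b : ℕ) (hb : 1 < b) :
    terminalWienerIndex (pathTree R r 1 b) > terminalWienerIndex (pathTree R r 0 (b + 1)) := by
  obtain ⟨t, rfl⟩ : ∃ t, b = t + 1 := ⟨b - 1, by omega⟩
  have key : pendentDistSum (pathTree R r 1 (t + 1)) =
      pendentDistSum (pathTree R r 0 (t + 1 + 1)) +
        2 * (∑ p ∈ pendentFinset R, R.dist p r + (t + 2)) := by
    rw [pendentDistSum_pathTree_one hR.connected hdeg, pendentDistSum_pathTree_zero hR.connected hdeg]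
    simp only [Finset.sum_add_distrib, Finset.sum_const, smul_eq_mul]
    ring
  change pendentDistSum _ / 2 > pendentDistSum _ / 2
  omega

/-- Let `R` be a tree on at least two vertices whose root `r` has degree at least `2`, and let
`b > 1`. Then `TW(T_{1,b}) > TW(T_{0,b+1})`. -/
theorem terminal_wiener_index_pathTree_gt {V : Type*} [Fintype V] (R : SimpleGraph V)
    [DecidableRel R.Adj] (r : V) (hR : R.IsTree) (hcard : 2 ≤ Fintype.card V)
    (hdeg : 2 ≤ R.degree r) (b : ℕ) (hb : 1 < b) :
    terminalWienerIndex (pathTree R r 1 b) > terminalWienerIndex (pathTree R r 0 (b + 1)) :=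
  terminal_wiener_index_pathTree_gt_general R r hR hdeg b hb
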